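/- Let H be a quaternionic Hilbert space, J ∈ B(H) anti self-adjoint and unitary, and ι an imaginary unit. As a ℂ_ι-complex vector space, H decomposes as the direct sum H = H₊^{Jι} ⊕ H₋^{Jι}, where H₊^{Jι} = {u : Ju = uι} and H₋^{Jι} = {u : Ju = -uι}; explicitly, every u ∈ H equals u₊ + u₋ with u₊ := ½(u - Juι) ∈ H₊^{Jι} and u₋ := ½(u + Juι) ∈ H₋^{Jι}. Moreover, for any imaginary unit j with ιj = -jι, the map u ↦ uj is an isometric ℂ_ι-anti-linear isomorphism from H₊^{Jι} onto H₋^{Jι}. -/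

import Mathlib

noncomputable section

notation "ℍ" => Quaternion ℝ

open MeasureTheory Filter

/-- Borel σ-algebra on the quaternions. -/
instance : MeasurableSpace ℍ := borel ℍ

instance : BorelSpace ℍ := ⟨rfl⟩

/-- A quaternionic (right) Hilbert space structure on a normed additive group `H`:
a right scalar multiplication by quaternions together with an ℍ-valued Hermitian
scalar product compatible with the norm.  (Completeness of `H` is assumed
separately via `[CompleteSpace H]`.) -/
structure QHS (H : Type) [NormedAddCommGroup H] where
  smul : H → ℍ → H
  inn : H → H → ℍ
  add_smul' : ∀ (u v : H) (q : ℍ), smul (u + v) q = smul u q + smul v q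
  smul_add' : ∀ (u : H) (p q : ℍ), smul u (p + q) = smul u p + smul u q
  smul_mul' : ∀ (u : H) (p q : ℍ), smul u (p * q) = smul (smul u p) q
  smul_one' : ∀ u : H, smul u 1 = u
  inn_add_right : ∀ u v w : H, inn u (v + w) = inn u v + inn u w
  inn_smul_right : ∀ (u v : H) (q : ℍ), inn u (smul v q) = inn u v * q
  inn_conj : ∀ u v : H, inn u v = star (inn v u)
  inn_self_real : ∀ u : H, inn u u = (((inn u u).re : ℝ) : ℍ)
  norm_sq' : ∀ u : H, ‖u‖ ^ 2 = (inn u u).re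

variable {H : Type} [NormedAddCommGroup H]

/-- The graph of an operator `T` with domain `D`. -/
def graphOf (T : H → H) (D : Set H) : Set (H × H) := {p | p.1 ∈ D ∧ p.2 = T p.1}

/-- Domain of a graph. -/
def graphDom (G : Set (H × H)) : Set H := {u | ∃ w, (u, w) ∈ G}

/-- A function extracted from a graph (by choice). -/
def graphFun (G : Set (H × H)) : H → H := fun u =>
  letI : Nonempty H := ⟨0⟩
  Classical.epsilon fun w => (u, w) ∈ G

/-- Boundedness of an everywhere defined operator. -/
def BoundedOp (T : H → H) : Prop := ∃ C : ℝ, ∀ u : H, ‖T u‖ ≤ C * ‖u‖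

/-- The operator norm. -/
def opNorm (T : H → H) : ℝ := sInf {C : ℝ | 0 ≤ C ∧ ∀ u : H, ‖T u‖ ≤ C * ‖u‖}

/-- Closed operator: the graph is closed. -/
def ClosedOp (T : H → H) (D : Set H) : Prop := IsClosed (graphOf T D)

/-- The domain `D(T²)`. -/
def D2 (T : H → H) (D : Set H) : Set H := {u ∈ D | T u ∈ D}

/-- The slice complex plane `ℂ_ι = {a + ι b}` determined by an imaginary unit `ι`. -/
def Cslice (ι : ℍ) : Set ℍ :=
  {x : ℍ | ∃ a b : ℝ, x = ((a : ℝ) : ℍ) + ι * ((b : ℝ) : ℍ)}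

/-- The closed upper half slice plane `ℂ_ι⁺ = {a + ι b : b ≥ 0}`. -/
def Cplus (ι : ℍ) : Set ℍ :=
  {x : ℍ | ∃ a b : ℝ, 0 ≤ b ∧ x = ((a : ℝ) : ℍ) + ι * ((b : ℝ) : ℍ)}

namespace QHS

variable (𝒮 : QHS H)

/-- Right ℍ-linearity of an everywhere defined map. -/
def RightLinear (T : H → H) : Prop :=
  (∀ u v : H, T (u + v) = T u + T v) ∧ ∀ (u : H) (q : ℍ), T (𝒮.smul u q) = 𝒮.smul (T u) q

/-- A (right ℍ-linear) subspace. -/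
def IsSubspace (D : Set H) : Prop :=
  (0 : H) ∈ D ∧ (∀ u ∈ D, ∀ v ∈ D, u + v ∈ D) ∧ ∀ u ∈ D, ∀ q : ℍ, 𝒮.smul u q ∈ D

/-- Right ℍ-linearity on a domain `D`. -/
def RightLinearOn (T : H → H) (D : Set H) : Prop :=
  (∀ u ∈ D, ∀ v ∈ D, T (u + v) = T u + T v) ∧
    ∀ u ∈ D, ∀ q : ℍ, T (𝒮.smul u q) = 𝒮.smul (T u) q

/-- `S` is the adjoint of `T` (both everywhere defined):  `⟨S u|v⟩ = ⟨u|T v⟩`. -/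
def AdjointPair (T S : H → H) : Prop := ∀ u v : H, 𝒮.inn (S u) v = 𝒮.inn u (T v)

def SelfAdjointOp (T : H → H) : Prop := ∀ u v : H, 𝒮.inn (T u) v = 𝒮.inn u (T v)

def AntiSelfAdjointOp (T : H → H) : Prop := ∀ u v : H, 𝒮.inn (T u) v = -𝒮.inn u (T v)

/-- Positivity: `⟨u|T u⟩` is real and non-negative. -/
def PositiveOp (T : H → H) : Prop :=
  ∀ u : H, 𝒮.inn u (T u) = ((((𝒮.inn u (T u)).re : ℝ)) : ℍ) ∧ 0 ≤ (𝒮.inn u (T u)).re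

/-- Positivity on a domain. -/
def PositiveOn (T : H → H) (D : Set H) : Prop :=
  ∀ u ∈ D, 𝒮.inn u (T u) = ((((𝒮.inn u (T u)).re : ℝ)) : ℍ) ∧ 0 ≤ (𝒮.inn u (T u)).re

/-- Unitarity: right linear, surjective, inner-product preserving. -/
def UnitaryOp (T : H → H) : Prop :=
  𝒮.RightLinear T ∧ Function.Surjective T ∧ ∀ u v : H, 𝒮.inn (T u) (T v) = 𝒮.inn u v

/-- The domain of the adjoint of `T : D → H`. -/
def adjDom (T : H → H) (D : Set H) : Set H :=
  {u : H | ∃ w : H, ∀ v ∈ D, 𝒮.inn w v = 𝒮.inn u (T v)}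

/-- The adjoint operator of `T : D → H` (defined by choice; it is the genuine
adjoint when `D` is dense). -/
def adjOp (T : H → H) (D : Set H) : H → H := fun u =>
  letI := Classical.propDecidable
  if h : ∃ w : H, ∀ v ∈ D, 𝒮.inn w v = 𝒮.inn u (T v) then h.choose else 0

/-- Self-adjointness of an unbounded operator: `T* = T` (same domain, same values). -/
def SelfAdjointUnb (T : H → H) (D : Set H) : Prop :=
  𝒮.adjDom T D = D ∧ ∀ u ∈ D, 𝒮.adjOp T D u = T u

/-- Normality of an unbounded operator: `T T* = T* T`. -/
def NormalUnb (T : H → H) (D : Set H) : Prop :=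
  ({u ∈ D | T u ∈ 𝒮.adjDom T D} = {u ∈ 𝒮.adjDom T D | 𝒮.adjOp T D u ∈ D}) ∧
    ∀ u ∈ D, T u ∈ 𝒮.adjDom T D → 𝒮.adjOp T D (T u) = T (𝒮.adjOp T D u)

/-- The positive square root of a positive bounded operator (by choice). -/
def posSqrt (T : H → H) : H → H :=
  letI : Nonempty (H → H) := ⟨id⟩
  Classical.epsilon fun R : H → H =>
    𝒮.RightLinear R ∧ BoundedOp R ∧ 𝒮.PositiveOp R ∧ 𝒮.SelfAdjointOp R ∧
      ∀ u : H, R (R u) = T u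

/-- The operator `Δ_q(T) = T² - T (2 Re q) + |q|² 1`. -/
def Delta (T : H → H) (q : ℍ) : H → H := fun u =>
  T (T u) - 𝒮.smul (T u) (((2 * q.re : ℝ)) : ℍ) + 𝒮.smul u (((‖q‖ ^ 2 : ℝ)) : ℍ)

/-- Membership in the spherical resolvent set: `Δ_q(T)` is injective with dense range
and bounded inverse. -/
def InSphResolvent (T : H → H) (D : Set H) (q : ℍ) : Prop :=
  (∀ u ∈ D2 T D, 𝒮.Delta T q u = 0 → u = 0) ∧
    Dense (𝒮.Delta T q '' D2 T D) ∧
    ∃ C : ℝ, ∀ u ∈ D2 T D, ‖u‖ ≤ C * ‖𝒮.Delta T q u‖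

/-- The spherical spectrum. -/
def sphSpectrum (T : H → H) (D : Set H) : Set ℍ := {q | ¬𝒮.InSphResolvent T D q}

/-- The spherical point spectrum. -/
def sphPointSpectrum (T : H → H) (D : Set H) : Set ℍ :=
  {q | ∃ u ∈ D2 T D, u ≠ 0 ∧ 𝒮.Delta T q u = 0}

/-- The spherical residual spectrum. -/
def sphResidualSpectrum (T : H → H) (D : Set H) : Set ℍ :=
  {q | (∀ u ∈ D2 T D, 𝒮.Delta T q u = 0 → u = 0) ∧
    ¬Dense (𝒮.Delta T q '' D2 T D)}

/-- The spherical continuous spectrum. -/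
def sphContinuousSpectrum (T : H → H) (D : Set H) : Set ℍ :=
  {q | (∀ u ∈ D2 T D, 𝒮.Delta T q u = 0 → u = 0) ∧
    Dense (𝒮.Delta T q '' D2 T D) ∧
    ¬∃ C : ℝ, ∀ u ∈ D2 T D, ‖u‖ ≤ C * ‖𝒮.Delta T q u‖}

/-- A Hilbert basis of a quaternionic Hilbert space. -/
def IsHilbertBasis (N : Set H) : Prop :=
  (∀ z ∈ N, ‖z‖ = 1) ∧ (∀ z ∈ N, ∀ w ∈ N, z ≠ w → 𝒮.inn z w = 0) ∧
    ∀ u : H, (∀ z ∈ N, 𝒮.inn z u = 0) → u = 0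

/-- `L` is the left scalar multiplication induced by the Hilbert basis `N`:
`L_q u = Σ_{z ∈ N} z q ⟨z|u⟩`. -/
def IsInducedLSM (N : Set H) (L : ℍ → H → H) : Prop :=
  ∀ (q : ℍ) (u : H),
    HasSum (fun z : N => 𝒮.smul (z : H) (q * 𝒮.inn (z : H) u)) (L q u)

/-- `L` is a left scalar multiplication of `H` (induced by some Hilbert basis). -/
def IsLSM (L : ℍ → H → H) : Prop :=
  ∃ N : Set H, 𝒮.IsHilbertBasis N ∧ 𝒮.IsInducedLSM N L

/-- The orthogonal complement of a subset. -/
def orthC (S : Set H) : Set H := {u : H | ∀ v ∈ S, 𝒮.inn u v = 0}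

/-- The complex subspace `H₊^{Jι} = {u : J u = u ι}`. -/
def Hplus (J : H → H) (ι : ℍ) : Set H := {u : H | J u = 𝒮.smul u ι}

/-- The complex subspace `H₋^{Jι} = {u : J u = -u ι}`. -/
def Hminus (J : H → H) (ι : ℍ) : Set H := {u : H | J u = -𝒮.smul u ι}

end QHS

/-- A quaternionic projection valued measure (qPVM) over `ℂ_ι⁺` in `H`. -/
structure IsQPVM (𝒮 : QHS H) (ι : ℍ) (P : Set ℍ → H → H) : Prop where
  proj_linear : ∀ E : Set ℍ, MeasurableSet E → E ⊆ Cplus ι → 𝒮.RightLinear (P E)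
  proj_bounded : ∀ E : Set ℍ, MeasurableSet E → E ⊆ Cplus ι → BoundedOp (P E)
  proj_idem : ∀ E : Set ℍ, MeasurableSet E → E ⊆ Cplus ι → ∀ u, P E (P E u) = P E u
  proj_sa : ∀ E : Set ℍ, MeasurableSet E → E ⊆ Cplus ι → 𝒮.SelfAdjointOp (P E)
  proj_pos : ∀ E : Set ℍ, MeasurableSet E → E ⊆ Cplus ι → 𝒮.PositiveOp (P E)
  total : ∀ u : H, P (Cplus ι) u = u
  inter : ∀ E F : Set ℍ, MeasurableSet E → E ⊆ Cplus ι → MeasurableSet F → F ⊆ Cplus ι →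
    ∀ u, P (E ∩ F) u = P E (P F u)
  sigma_add : ∀ E : ℕ → Set ℍ, (∀ n, MeasurableSet (E n) ∧ E n ⊆ Cplus ι) →
    (Pairwise fun n m => Disjoint (E n) (E m)) →
    ∀ u : H, HasSum (fun n => P (E n) u) (P (⋃ n, E n) u)

/-- The support of a qPVM: points of `ℂ_ι⁺` all of whose relatively open neighbourhoods
have non-zero projection. -/
def suppP (ι : ℍ) (P : Set ℍ → H → H) : Set ℍ :=
  {x ∈ Cplus ι | ∀ U : Set ℍ, IsOpen U → x ∈ U → ∃ u : H, P (U ∩ Cplus ι) u ≠ 0}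

/-- An intertwining quaternionic PVM (iqPVM): a qPVM together with a commuting left
scalar multiplication. -/
def IsIQPVM (𝒮 : QHS H) (ι : ℍ) (P : Set ℍ → H → H) (L : ℍ → H → H) : Prop :=
  IsQPVM 𝒮 ι P ∧ 𝒮.IsLSM L ∧
    ∀ E : Set ℍ, MeasurableSet E → E ⊆ Cplus ι →
      ∀ (q : ℍ) (u : H), P E (L q u) = L q (P E u)

/-- Data of a simple function: coefficients and pairwise disjoint Borel subsets of `ℂ_ι⁺`. -/
def IsSimpleData (ι : ℍ) {n : ℕ} (c : Fin n → ℍ) (E : Fin n → Set ℍ) : Prop :=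
  (∀ ℓ, MeasurableSet (E ℓ) ∧ E ℓ ⊆ Cplus ι) ∧
    Pairwise fun ℓ ℓ' => Disjoint (E ℓ) (E ℓ')

/-- `S = ∫ φ d𝒫`, characterized by uniform approximation (on the support of `P`)
by simple functions together with approximation of `S` by the corresponding
elementary integrals `Σ_ℓ L_{c_ℓ} P(E_ℓ)`. -/
def IsBoundedIntegral (𝒮 : QHS H) (ι : ℍ) (P : Set ℍ → H → H) (L : ℍ → H → H)
    (φ : ℍ → ℍ) (S : H → H) : Prop :=
  ∀ ε : ℝ, 0 < ε → ∃ (n : ℕ) (c : Fin n → ℍ) (E : Fin n → Set ℍ),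
    IsSimpleData ι c E ∧
    (∀ x ∈ suppP ι P, ‖φ x - ∑ ℓ, Set.indicator (E ℓ) (fun _ => c ℓ) x‖ ≤ ε) ∧
    ∀ u : H, ‖S u - ∑ ℓ, L (c ℓ) (P (E ℓ) u)‖ ≤ ε * ‖u‖

/-- The integral of a bounded measurable function with respect to an iqPVM
(defined by choice from the characterizing property). -/
def bInt (𝒮 : QHS H) (ι : ℍ) (P : Set ℍ → H → H) (L : ℍ → H → H) (φ : ℍ → ℍ) : H → H :=
  letI : Nonempty (H → H) := ⟨id⟩
  Classical.epsilon fun S : H → H => IsBoundedIntegral 𝒮 ι P L φ S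

/-- The `P`-essential supremum norm `‖φ‖_∞^{(P)}`. -/
def essSupNorm (ι : ℍ) (P : Set ℍ → H → H) (φ : ℍ → ℍ) : ℝ :=
  sInf {k : ℝ | 0 ≤ k ∧ ∀ u : H, P {x ∈ Cplus ι | k < ‖φ x‖} u = 0}

/-- `μ` is the positive Borel measure `μ_u^{(P)} : E ↦ ⟨u|P(E)u⟩`. -/
def muMatches (𝒮 : QHS H) (ι : ℍ) (P : Set ℍ → H → H) (u : H) (μ : Measure ℍ) : Prop :=
  ∀ E : Set ℍ, MeasurableSet E →
    μ E = ENNReal.ofReal ((𝒮.inn u (P (E ∩ Cplus ι) u)).re)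

/-- The natural domain `D_f = {u : f ∈ L²(μ_u^{(P)})}` of `∫ f d𝒫`. -/
def Dnat (𝒮 : QHS H) (ι : ℍ) (P : Set ℍ → H → H) (f : ℍ → ℍ) : Set H :=
  {u : H | ∃ μ : Measure ℍ, muMatches 𝒮 ι P u μ ∧
    (∫⁻ x, ENNReal.ofReal (‖f x‖ ^ 2) ∂μ) < ⊤}

/-- The truncation of `f` at level `n`. -/
def trunc (f : ℍ → ℍ) (n : ℕ) : ℍ → ℍ := fun x => if ‖f x‖ ≤ (n : ℝ) then f x else 0

/-- The integral of a possibly unbounded measurable function with respect to an iqPVM: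
the strong limit of the integrals of its truncations. -/
def uInt (𝒮 : QHS H) (ι : ℍ) (P : Set ℍ → H → H) (L : ℍ → H → H) (f : ℍ → ℍ) : H → H :=
  fun u =>
    letI : Nonempty H := ⟨0⟩
    limUnder atTop fun n : ℕ => bInt 𝒮 ι P L (trunc f n) u

/-- The inverse `(1 + T*T)⁻¹` of `1 + T*T` (by choice). -/
def CT (𝒮 : QHS H) (T : H → H) (D : Set H) : H → H :=
  letI : Nonempty (H → H) := ⟨id⟩
  Classical.epsilon fun C : H → H =>
    (∀ y : H, C y ∈ D ∧ T (C y) ∈ 𝒮.adjDom T D ∧ C y + 𝒮.adjOp T D (T (C y)) = y) ∧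
      ∀ u ∈ D, T u ∈ 𝒮.adjDom T D → C (u + 𝒮.adjOp T D (T u)) = u

/-- The bounded transform `Z_T = T (1 + T*T)^{-1/2}`. -/
def ZT (𝒮 : QHS H) (T : H → H) (D : Set H) : H → H := fun u =>
  T (𝒮.posSqrt (CT 𝒮 T D) u)

end

/-!
Anti-self-adjointness and unitarity give `J² = -1`, since `⟨w, J J v⟩ = -⟨J w, J v⟩ = -⟨w, v⟩`.
With `ι² = -1` this makes `u - (J u) ι` satisfy `J x = x ι` and `u + (J u) ι` satisfy
`J x = -x ι`, and the two halves add up to `u`. A vector satisfying both conditions has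
`u (2ι) = 0`, so it vanishes. Right multiplication by `j` exchanges the two conditions because
`j` anticommutes with `ι`; it is inverted by right multiplication by `-j`, preserves norms
because `‖j‖ = 1`, and is `ℂ_ι`-anti-linear because `c j = j c̄` for `c ∈ ℂ_ι`.
-/

lemma Quaternion.norm_eq_one_of_sq_eq_neg_one {q : ℍ} (hq : q ^ 2 = -1) : ‖q‖ = 1 :=
  (pow_eq_one_iff_of_nonneg (norm_nonneg q) two_ne_zero).mp
    (by rw [← norm_pow, hq, norm_neg, norm_one])

lemma Quaternion.star_eq_neg_of_sq_eq_neg_one {q : ℍ} (hq : q ^ 2 = -1) : star q = -q := by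
  have hnormSq : Quaternion.normSq q = 1 := by
    rw [Quaternion.normSq_eq_norm_mul_self, Quaternion.norm_eq_one_of_sq_eq_neg_one hq, one_mul]
  exact Quaternion.star_eq_neg.mpr
    (Quaternion.sq_eq_neg_normSq.mp (by rw [hq, hnormSq, Quaternion.coe_one]))

lemma Quaternion.mul_eq_mul_star_of_mem_Cslice {ι j c : ℍ} (hι : ι ^ 2 = -1)
    (hanti : ι * j = -(j * ι)) (hc : c ∈ Cslice ι) : c * j = j * star c := by
  obtain ⟨a, b, rfl⟩ := hc
  rw [star_add, star_mul, Quaternion.star_coe, Quaternion.star_coe,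
    Quaternion.star_eq_neg_of_sq_eq_neg_one hι, add_mul, mul_add, Quaternion.coe_commutes,
    mul_assoc, Quaternion.coe_commutes b j, ← mul_assoc, ← mul_assoc, hanti, neg_mul, mul_neg,
    mul_assoc, mul_assoc, ← Quaternion.coe_commutes b ι]

namespace QHS

variable {H : Type} [NormedAddCommGroup H] (𝒮 : QHS H)

lemma smul_zero (u : H) : 𝒮.smul u 0 = 0 :=
  left_eq_add.mp (by rw [← 𝒮.smul_add', add_zero] : 𝒮.smul u 0 = 𝒮.smul u 0 + 𝒮.smul u 0)

lemma zero_smul (q : ℍ) : 𝒮.smul 0 q = 0 :=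
  left_eq_add.mp (by rw [← 𝒮.add_smul', add_zero] : 𝒮.smul 0 q = 𝒮.smul 0 q + 𝒮.smul 0 q)

lemma smul_neg (u : H) (q : ℍ) : 𝒮.smul u (-q) = -𝒮.smul u q :=
  eq_neg_of_add_eq_zero_right (by rw [← 𝒮.smul_add', add_neg_cancel, 𝒮.smul_zero])

lemma neg_smul (u : H) (q : ℍ) : 𝒮.smul (-u) q = -𝒮.smul u q :=
  eq_neg_of_add_eq_zero_right (by rw [← 𝒮.add_smul', add_neg_cancel, 𝒮.zero_smul])

lemma sub_smul (u v : H) (q : ℍ) : 𝒮.smul (u - v) q = 𝒮.smul u q - 𝒮.smul v q := by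
  rw [sub_eq_add_neg, 𝒮.add_smul', 𝒮.neg_smul, ← sub_eq_add_neg]

lemma smul_smul_inv {q : ℍ} (hq : q ≠ 0) (u : H) : 𝒮.smul (𝒮.smul u q) q⁻¹ = u := by
  rw [← 𝒮.smul_mul', mul_inv_cancel₀ hq, 𝒮.smul_one']

lemma eq_zero_of_smul_eq_zero {u : H} {q : ℍ} (hq : q ≠ 0) (h : 𝒮.smul u q = 0) : u = 0 := by
  rw [← 𝒮.smul_smul_inv hq u, h, 𝒮.zero_smul]

lemma smul_smul_of_sq_eq_neg_one {q : ℍ} (hq : q ^ 2 = -1) (u : H) :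
    𝒮.smul (𝒮.smul u q) q = -u := by
  rw [← 𝒮.smul_mul', ← sq, hq, 𝒮.smul_neg, 𝒮.smul_one']

lemma smul_sub_add_smul_add_half (u v : H) :
    𝒮.smul (u - v) (((2 : ℝ)⁻¹ : ℝ) : ℍ) + 𝒮.smul (u + v) (((2 : ℝ)⁻¹ : ℝ) : ℍ) = u := by
  have hhalves : (2 : ℝ)⁻¹ + 2⁻¹ = 1 := by norm_num
  rw [← 𝒮.add_smul', sub_add_add_cancel, 𝒮.add_smul', ← 𝒮.smul_add', ← Quaternion.coe_add,
    hhalves, Quaternion.coe_one, 𝒮.smul_one']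

lemma inn_smul_left (u v : H) (q : ℍ) : 𝒮.inn (𝒮.smul u q) v = star q * 𝒮.inn u v := by
  rw [𝒮.inn_conj, 𝒮.inn_smul_right, star_mul, ← 𝒮.inn_conj]

lemma norm_smul (u : H) (q : ℍ) : ‖𝒮.smul u q‖ = ‖q‖ * ‖u‖ := by
  have hsq : ‖𝒮.smul u q‖ ^ 2 = (‖q‖ * ‖u‖) ^ 2 := by
    rw [𝒮.norm_sq', 𝒮.inn_smul_left, 𝒮.inn_smul_right, 𝒮.inn_self_real u, ← mul_assoc,
      ← Quaternion.coe_commutes, mul_assoc, Quaternion.star_mul_self, ← Quaternion.coe_mul,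
      Quaternion.re_coe, mul_pow, 𝒮.norm_sq', sq, Quaternion.normSq_eq_norm_mul_self, mul_comm]
  exact (pow_left_inj₀ (norm_nonneg _) (by positivity) two_ne_zero).mp hsq

lemma eq_zero_of_inn_self_eq_zero {u : H} (h : 𝒮.inn u u = 0) : u = 0 := by
  have hnorm := 𝒮.norm_sq' u
  rw [h, Quaternion.re_zero, sq_eq_zero_iff, norm_eq_zero] at hnorm
  exact hnorm

variable {𝒮}

lemma AntiSelfAdjointOp.apply_apply_eq_neg {T : H → H} (hT : 𝒮.AntiSelfAdjointOp T)
    (hiso : ∀ u v, 𝒮.inn (T u) (T v) = 𝒮.inn u v) (u : H) : T (T u) = -u := by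
  have horth : ∀ w, 𝒮.inn w (T (T u) + u) = 0 := fun w => by
    rw [𝒮.inn_add_right, ← neg_neg (𝒮.inn w (T (T u))), ← hT, hiso, neg_add_cancel]
  exact eq_neg_of_add_eq_zero_left (𝒮.eq_zero_of_inn_self_eq_zero (horth _))

lemma RightLinear.map_neg {T : H → H} (hT : 𝒮.RightLinear T) (u : H) : T (-u) = -T u :=
  (AddMonoidHom.mk' T hT.1).map_neg u

lemma RightLinear.map_sub {T : H → H} (hT : 𝒮.RightLinear T) (u v : H) :
    T (u - v) = T u - T v :=
  (AddMonoidHom.mk' T hT.1).map_sub u v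

variable {J : H → H} {ι : ℍ}

@[simp] lemma mem_Hplus {u : H} : u ∈ 𝒮.Hplus J ι ↔ J u = 𝒮.smul u ι := Iff.rfl

@[simp] lemma mem_Hminus {u : H} : u ∈ 𝒮.Hminus J ι ↔ J u = -𝒮.smul u ι := Iff.rfl

lemma sub_smul_apply_mem_Hplus (hJ : 𝒮.RightLinear J) (hJJ : ∀ u, J (J u) = -u)
    (hι : ι ^ 2 = -1) (u : H) : u - 𝒮.smul (J u) ι ∈ 𝒮.Hplus J ι := by
  rw [mem_Hplus, hJ.map_sub, hJ.2, hJJ, 𝒮.neg_smul, sub_neg_eq_add, 𝒮.sub_smul,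
    𝒮.smul_smul_of_sq_eq_neg_one hι, sub_neg_eq_add, add_comm]

lemma add_smul_apply_mem_Hminus (hJ : 𝒮.RightLinear J) (hJJ : ∀ u, J (J u) = -u)
    (hι : ι ^ 2 = -1) (u : H) : u + 𝒮.smul (J u) ι ∈ 𝒮.Hminus J ι := by
  rw [mem_Hminus, hJ.1, hJ.2, hJJ, 𝒮.neg_smul, 𝒮.add_smul',
    𝒮.smul_smul_of_sq_eq_neg_one hι, neg_add, neg_neg, ← sub_eq_add_neg, sub_eq_neg_add]

lemma smul_mem_Hplus_of_commute (hJ : 𝒮.RightLinear J) {c : ℍ} (hc : Commute c ι) {u : H}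
    (hu : u ∈ 𝒮.Hplus J ι) : 𝒮.smul u c ∈ 𝒮.Hplus J ι := by
  rw [mem_Hplus, hJ.2, hu, ← 𝒮.smul_mul', ← 𝒮.smul_mul', hc.eq]

lemma smul_mem_Hminus_of_commute (hJ : 𝒮.RightLinear J) {c : ℍ} (hc : Commute c ι) {u : H}
    (hu : u ∈ 𝒮.Hminus J ι) : 𝒮.smul u c ∈ 𝒮.Hminus J ι := by
  rw [mem_Hminus, hJ.2, hu, 𝒮.neg_smul, ← 𝒮.smul_mul', ← 𝒮.smul_mul', hc.eq]

lemma smul_mem_Hminus_of_anticommute (hJ : 𝒮.RightLinear J) {c : ℍ} (hc : ι * c = -(c * ι))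
    {u : H} (hu : u ∈ 𝒮.Hplus J ι) : 𝒮.smul u c ∈ 𝒮.Hminus J ι := by
  rw [mem_Hminus, hJ.2, hu, ← 𝒮.smul_mul', ← 𝒮.smul_mul', hc, 𝒮.smul_neg]

lemma smul_mem_Hplus_of_anticommute (hJ : 𝒮.RightLinear J) {c : ℍ} (hc : ι * c = -(c * ι))
    {u : H} (hu : u ∈ 𝒮.Hminus J ι) : 𝒮.smul u c ∈ 𝒮.Hplus J ι := by
  rw [mem_Hplus, hJ.2, hu, 𝒮.neg_smul, ← 𝒮.smul_mul', ← 𝒮.smul_mul', hc, 𝒮.smul_neg, neg_neg]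

lemma neg_mem_Hminus (hJ : 𝒮.RightLinear J) {u : H} (hu : u ∈ 𝒮.Hminus J ι) :
    -u ∈ 𝒮.Hminus J ι := by
  rw [mem_Hminus, hJ.map_neg, hu, 𝒮.neg_smul]

lemma eq_zero_of_mem_Hplus_of_mem_Hminus (hι : ι ≠ 0) {u : H} (hplus : u ∈ 𝒮.Hplus J ι)
    (hminus : u ∈ 𝒮.Hminus J ι) : u = 0 := by
  have hsum : 𝒮.smul u (ι + ι) = 0 := by
    rw [𝒮.smul_add']
    exact eq_neg_iff_add_eq_zero.mp (hplus.symm.trans hminus)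
  exact 𝒮.eq_zero_of_smul_eq_zero (by rw [← two_smul ℝ ι]; exact smul_ne_zero two_ne_zero hι) hsum

lemma bijOn_smul_Hplus_Hminus (hJ : 𝒮.RightLinear J) {j : ℍ} (hj : j ^ 2 = -1)
    (hanti : ι * j = -(j * ι)) :
    Set.BijOn (fun u => 𝒮.smul u j) (𝒮.Hplus J ι) (𝒮.Hminus J ι) := by
  have hj0 : j ≠ 0 := by rintro rfl; norm_num at hj
  refine ⟨fun u hu => smul_mem_Hminus_of_anticommute hJ hanti hu,
    fun u _ v _ huv => by
      simpa only [𝒮.smul_smul_inv hj0] using congrArg (fun w => 𝒮.smul w j⁻¹) huv,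
    fun v hv => ⟨𝒮.smul v (-j), smul_mem_Hplus_of_anticommute hJ ?_ hv, ?_⟩⟩
  · rw [mul_neg, neg_mul, hanti]
  · show 𝒮.smul (𝒮.smul v (-j)) j = v
    rw [← 𝒮.smul_mul', neg_mul, ← sq, hj, neg_neg, 𝒮.smul_one']

end QHS

theorem complex_subspace_decomposition_general
    {H : Type} [NormedAddCommGroup H] (𝒮 : QHS H)
    (J : H → H)
    (hJanti : 𝒮.AntiSelfAdjointOp J) (hJuni : 𝒮.UnitaryOp J)
    (ι j : ℍ) (hι : ι ^ 2 = -1) (hj : j ^ 2 = -1) (hanti : ι * j = -(j * ι)) :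
    (∀ u : H,
      𝒮.smul (u - 𝒮.smul (J u) ι) ((((2 : ℝ)⁻¹ : ℝ)) : ℍ) ∈ 𝒮.Hplus J ι ∧
      𝒮.smul (u + 𝒮.smul (J u) ι) ((((2 : ℝ)⁻¹ : ℝ)) : ℍ) ∈ 𝒮.Hminus J ι ∧
      u = 𝒮.smul (u - 𝒮.smul (J u) ι) ((((2 : ℝ)⁻¹ : ℝ)) : ℍ)
          + 𝒮.smul (u + 𝒮.smul (J u) ι) ((((2 : ℝ)⁻¹ : ℝ)) : ℍ)) ∧
    -- directness of the sum
    (∀ a ∈ 𝒮.Hplus J ι, ∀ b ∈ 𝒮.Hminus J ι, a + b = 0 → a = 0 ∧ b = 0) ∧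
    -- u ↦ u j is an isometric ℂ_ι-anti-linear isomorphism H₊ → H₋
    Set.BijOn (fun u => 𝒮.smul u j) (𝒮.Hplus J ι) (𝒮.Hminus J ι) ∧
    (∀ u ∈ 𝒮.Hplus J ι, ‖𝒮.smul u j‖ = ‖u‖) ∧
    (∀ u ∈ 𝒮.Hplus J ι, ∀ v ∈ 𝒮.Hplus J ι, 𝒮.smul (u + v) j = 𝒮.smul u j + 𝒮.smul v j) ∧
    (∀ u ∈ 𝒮.Hplus J ι, ∀ c ∈ Cslice ι,
      𝒮.smul (𝒮.smul u c) j = 𝒮.smul (𝒮.smul u j) (star c)) := by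
  obtain ⟨hJ, -, hJiso⟩ := hJuni
  have hJJ : ∀ u, J (J u) = -u := hJanti.apply_apply_eq_neg hJiso
  have hι0 : ι ≠ 0 := by rintro rfl; norm_num at hι
  refine ⟨fun u => ⟨?_, ?_, ?_⟩, fun a ha b hb hab => ?_, QHS.bijOn_smul_Hplus_Hminus hJ hj hanti,
    fun u _ => ?_, fun u _ v _ => 𝒮.add_smul' u v j, fun u _ c hc => ?_⟩
  · exact QHS.smul_mem_Hplus_of_commute hJ (Quaternion.coe_commute _ _)
      (QHS.sub_smul_apply_mem_Hplus hJ hJJ hι u)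
  · exact QHS.smul_mem_Hminus_of_commute hJ (Quaternion.coe_commute _ _)
      (QHS.add_smul_apply_mem_Hminus hJ hJJ hι u)
  · exact (𝒮.smul_sub_add_smul_add_half u _).symm
  · have hb_eq : b = -a := eq_neg_of_add_eq_zero_right hab
    have ha0 : a = 0 := QHS.eq_zero_of_mem_Hplus_of_mem_Hminus hι0 ha
      (neg_neg a ▸ QHS.neg_mem_Hminus hJ (hb_eq ▸ hb))
    exact ⟨ha0, by rw [hb_eq, ha0, neg_zero]⟩
  · rw [𝒮.norm_smul, Quaternion.norm_eq_one_of_sq_eq_neg_one hj, one_mul]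
  · rw [← 𝒮.smul_mul', ← 𝒮.smul_mul', Quaternion.mul_eq_mul_star_of_mem_Cslice hι hanti hc]

/-- **decomposition `H = H₊^{Jι} ⊕ H₋^{Jι}`.**
For `J` anti self-adjoint and unitary and `ι` an imaginary unit, every `u ∈ H`
decomposes as `u = u₊ + u₋` with `u₊ = ½(u - J u ι) ∈ H₊^{Jι}` and
`u₋ = ½(u + J u ι) ∈ H₋^{Jι}`, the decomposition being direct; moreover, for any
imaginary unit `j` anticommuting with `ι`, the map `u ↦ u j` is an isometric
`ℂ_ι`-anti-linear (additive) bijection from `H₊^{Jι}` onto `H₋^{Jι}`. -/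
theorem complex_subspace_decomposition
    {H : Type} [NormedAddCommGroup H] [CompleteSpace H] (𝒮 : QHS H)
    (J : H → H) (hJlin : 𝒮.RightLinear J) (hJbdd : BoundedOp J)
    (hJanti : 𝒮.AntiSelfAdjointOp J) (hJuni : 𝒮.UnitaryOp J)
    (ι j : ℍ) (hι : ι ^ 2 = -1) (hj : j ^ 2 = -1) (hanti : ι * j = -(j * ι)) :
    (∀ u : H,
      𝒮.smul (u - 𝒮.smul (J u) ι) ((((2 : ℝ)⁻¹ : ℝ)) : ℍ) ∈ 𝒮.Hplus J ι ∧
      𝒮.smul (u + 𝒮.smul (J u) ι) ((((2 : ℝ)⁻¹ : ℝ)) : ℍ) ∈ 𝒮.Hminus J ι ∧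
      u = 𝒮.smul (u - 𝒮.smul (J u) ι) ((((2 : ℝ)⁻¹ : ℝ)) : ℍ)
          + 𝒮.smul (u + 𝒮.smul (J u) ι) ((((2 : ℝ)⁻¹ : ℝ)) : ℍ)) ∧
    -- directness of the sum
    (∀ a ∈ 𝒮.Hplus J ι, ∀ b ∈ 𝒮.Hminus J ι, a + b = 0 → a = 0 ∧ b = 0) ∧
    -- u ↦ u j is an isometric ℂ_ι-anti-linear isomorphism H₊ → H₋
    Set.BijOn (fun u => 𝒮.smul u j) (𝒮.Hplus J ι) (𝒮.Hminus J ι) ∧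
    (∀ u ∈ 𝒮.Hplus J ι, ‖𝒮.smul u j‖ = ‖u‖) ∧
    (∀ u ∈ 𝒮.Hplus J ι, ∀ v ∈ 𝒮.Hplus J ι, 𝒮.smul (u + v) j = 𝒮.smul u j + 𝒮.smul v j) ∧
    (∀ u ∈ 𝒮.Hplus J ι, ∀ c ∈ Cslice ι,
      𝒮.smul (𝒮.smul u c) j = 𝒮.smul (𝒮.smul u j) (star c)) :=
  complex_subspace_decomposition_general 𝒮 J hJanti hJuni ι j hι hj hanti
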